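/- arXiv:2007.11115 — 2 statements merged into one kernel-verified Lean document; each statement's English description precedes it below -/
import Mathlib

section
/- For Shamir secret sharing with threshold T, the conditional probability that the secret equals any value ρ₀ given any T shares equals the prior probability 1/|F_p^d|, when the secret is uniformly distributed: P[w = ρ₀ | f(θ_1)=ρ_1,...,f(θ_T)=ρ_T] = 1/p^d. -/
open Finset

lemma shamir_phi_injective (p : ℕ) (hp : p.Prime) (T : ℕ)
    (θ : Fin T → ZMod p) (hθ : Function.Injective θ) (hθ0 : ∀ i, θ i ≠ 0) :
    Function.Injective (fun r : Fin T → ZMod p =>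
      fun i => ∑ j : Fin T, r j * θ i ^ ((j : ℕ) + 1)) := by
  haveI := Fact.mk hp
  intro r s h
  simp only [funext_iff] at h
  set q : Polynomial (ZMod p) :=
    ∑ j : Fin T, Polynomial.C (r j - s j) * Polynomial.X ^ ((j : ℕ) + 1) with hq
  have hcoeff : ∀ k : Fin T, q.coeff ((k : ℕ) + 1) = r k - s k := by
    intro k
    rw [hq, Polynomial.finset_sum_coeff]
    rw [Finset.sum_eq_single k]
    · rw [Polynomial.coeff_C_mul, Polynomial.coeff_X_pow, if_pos rfl, mul_one]
    · intro b _ hb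
      rw [Polynomial.coeff_C_mul, Polynomial.coeff_X_pow, if_neg, mul_zero]
      exact fun h' => hb (Fin.ext (by omega))
    · simp
  have heval : ∀ x ∈ insert (0 : ZMod p) (Finset.univ.image θ), q.eval x = 0 := by
    intro x hx
    rcases Finset.mem_insert.mp hx with rfl | hx
    · simp [hq, Polynomial.eval_finset_sum]
    · obtain ⟨i, _, rfl⟩ := Finset.mem_image.mp hx
      simp only [hq, Polynomial.eval_finset_sum, Polynomial.eval_mul, Polynomial.eval_C,
        Polynomial.eval_pow, Polynomial.eval_X, sub_mul]
      rw [Finset.sum_sub_distrib, h i, sub_self]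
  have hcard : q.natDegree < (insert (0 : ZMod p) (Finset.univ.image θ)).card := by
    have h1 : (insert (0 : ZMod p) (Finset.univ.image θ)).card = T + 1 := by
      rw [Finset.card_insert_of_notMem]
      · rw [Finset.card_image_of_injective _ hθ, Finset.card_univ, Fintype.card_fin]
      · simp only [Finset.mem_image, Finset.mem_univ, true_and, not_exists]
        intro i hi; exact hθ0 i hi
    rw [h1]
    have : q.natDegree ≤ T := by
      apply Polynomial.natDegree_sum_le_of_forall_le
      intro j _
      apply le_trans (Polynomial.natDegree_C_mul_le _ _)
      rw [Polynomial.natDegree_X_pow]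
      exact Nat.succ_le_of_lt j.isLt
    omega
  have hq0 : q = 0 :=
    Polynomial.eq_zero_of_natDegree_lt_card_of_eval_eq_zero' q _ heval hcard
  funext k
  have := hcoeff k
  rw [hq0] at this
  simp only [Polynomial.coeff_zero] at this
  exact sub_eq_zero.mp this.symm

/-- For Shamir secret sharing with threshold `T` and uniformly distributed
secret `w` on `F_p^d` (with independent uniform coefficients `r_j`), the
conditional probability that the secret equals any `ρ₀` given any `T` shares
equals the prior `1/p^d`:
`P[w = ρ₀ ∣ f(θ_1)=ρ_1,…,f(θ_T)=ρ_T] = 1/p^d`. -/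
theorem shamir_conditional_probability (p : ℕ) (hp : p.Prime) [NeZero p]
    (d T : ℕ) (hT : 1 ≤ T)
    (θ : Fin T → ZMod p) (hθ : Function.Injective θ) (hθ0 : ∀ i, θ i ≠ 0)
    (ρ₀ : Fin d → ZMod p) (ρ : Fin T → Fin d → ZMod p) :
    ((univ.filter (fun ω : (Fin d → ZMod p) × (Fin T → Fin d → ZMod p) =>
        ω.1 = ρ₀ ∧
          ∀ i k, ω.1 k + ∑ j : Fin T, ω.2 j k * (θ i) ^ ((j : ℕ) + 1) = ρ i k)).card : ℚ)
      / ((univ.filter (fun ω : (Fin d → ZMod p) × (Fin T → Fin d → ZMod p) =>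
        ∀ i k, ω.1 k + ∑ j : Fin T, ω.2 j k * (θ i) ^ ((j : ℕ) + 1) = ρ i k)).card : ℚ)
      = 1 / (p : ℚ) ^ d := by
  classical
  set Φ : (Fin T → ZMod p) → (Fin T → ZMod p) :=
    fun r => fun i => ∑ j : Fin T, r j * θ i ^ ((j : ℕ) + 1) with hΦ
  have hinj : Function.Injective Φ := shamir_phi_injective p hp T θ hθ hθ0
  have hbij : Function.Bijective Φ := (Finite.injective_iff_bijective).mp hinj
  set E := Equiv.ofBijective Φ hbij with hE
  set g : (Fin d → ZMod p) → ((Fin d → ZMod p) × (Fin T → Fin d → ZMod p)) :=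
    fun w => (w, fun j k => E.symm (fun i => ρ i k - w k) j) with hg
  have hgi : Function.Injective g := fun a b hab => congrArg Prod.fst hab
  have key : ∀ (w : Fin d → ZMod p) (r : Fin T → Fin d → ZMod p),
      (∀ i k, w k + ∑ j : Fin T, r j k * θ i ^ ((j : ℕ) + 1) = ρ i k) ↔ (w, r) = g w := by
    intro w r
    constructor
    · intro h
      rw [hg]
      refine Prod.ext rfl ?_
      funext j k
      have h1 : Φ (fun j => r j k) = fun i => ρ i k - w k := by
        funext i
        rw [hΦ]
        have := h i k
        simp only
        linear_combination this
      have : (fun j => r j k) = E.symm (fun i => ρ i k - w k) := by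
        rw [← h1]; exact (E.symm_apply_apply _).symm
      exact congrFun this j
    · intro h i k
      have h2 : r = fun j k => E.symm (fun i => ρ i k - w k) j := congrArg Prod.snd h
      have h3 : Φ (E.symm (fun i => ρ i k - w k)) = fun i => ρ i k - w k :=
        E.apply_symm_apply _
      have h4 := congrFun h3 i
      rw [hΦ] at h4
      simp only at h4
      rw [h2]
      simp only
      linear_combination h4
  have hden : (univ.filter (fun ω : (Fin d → ZMod p) × (Fin T → Fin d → ZMod p) =>
        ∀ i k, ω.1 k + ∑ j : Fin T, ω.2 j k * (θ i) ^ ((j : ℕ) + 1) = ρ i k))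
      = Finset.univ.image g := by
    ext ⟨w, r⟩
    simp only [Finset.mem_filter, Finset.mem_univ, true_and, Finset.mem_image]
    rw [key w r]
    constructor
    · intro h; exact ⟨w, h.symm⟩
    · rintro ⟨w', hw'⟩
      have : w' = w := congrArg Prod.fst hw'
      rw [this] at hw'; exact hw'.symm
  have hnum : (univ.filter (fun ω : (Fin d → ZMod p) × (Fin T → Fin d → ZMod p) =>
        ω.1 = ρ₀ ∧
          ∀ i k, ω.1 k + ∑ j : Fin T, ω.2 j k * (θ i) ^ ((j : ℕ) + 1) = ρ i k))
      = {g ρ₀} := by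
    ext ⟨w, r⟩
    simp only [Finset.mem_filter, Finset.mem_univ, true_and, Finset.mem_singleton]
    constructor
    · rintro ⟨rfl, h⟩
      exact (key w r).mp h
    · intro h
      have hw : w = ρ₀ := congrArg Prod.fst h
      subst hw
      exact ⟨rfl, (key w r).mpr h⟩
  rw [hnum, hden, Finset.card_singleton,
    Finset.card_image_of_injective _ hgi, Finset.card_univ]
  simp only [Fintype.card_fun, Fintype.card_fin, ZMod.card]
  push_cast
  ring
end

section
/- If q²‖Q_q(w_j) - Q_q(w_k)‖² < (p-1)/2, then the finite-field distance computation satisfies φ⁻¹(‖φ(q·Q_q(w_j)) - φ(q·Q_q(w_k))‖²)/q² = ‖Q_q(w_j) - Q_q(w_k)‖², i.e., the recovered real-domain distance equals the squared Euclidean distance between the quantized models. -/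
/-- The two's complement embedding `φ : ℤ → F_p`. -/
def twosComplement (p : ℕ) (x : ℤ) : ZMod p :=
  if 0 ≤ x then (x : ZMod p) else (((p : ℤ) + x : ℤ) : ZMod p)

/-- The demapping `φ⁻¹ : F_p → ℤ`. -/
def twosComplementInv (p : ℕ) (a : ZMod p) : ℤ :=
  if (a.val : ℤ) < ((p : ℤ) - 1) / 2 then (a.val : ℤ) else (a.val : ℤ) - p

lemma twosComplement_eq_cast (p : ℕ) (x : ℤ) : twosComplement p x = (x : ZMod p) := by
  unfold twosComplement
  split
  · rfl
  · push_cast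
    simp

/-- Correct recovery of the real-domain distance between quantized models:
with `Q_q(w_j) = u/q` and `Q_q(w_k) = v/q` for integer vectors `u, v`, if
`q²‖Q_q(w_j) - Q_q(w_k)‖² < (p-1)/2`, then
`φ⁻¹(‖φ(q·Q_q(w_j)) - φ(q·Q_q(w_k))‖²)/q² = ‖Q_q(w_j) - Q_q(w_k)‖²`. -/
theorem quantized_distance_recovery (p : ℕ) (hp : p.Prime) (hodd : Odd p)
    (q : ℕ) (hq : 0 < q) (d : ℕ) (u v : Fin d → ℤ)
    (hcomp : ∀ i, |u i| < ((p : ℤ) - 1) / 2 ∧ |v i| < ((p : ℤ) - 1) / 2)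
    (hbound : (q : ℚ) ^ 2 * ∑ i, ((u i : ℚ) / q - (v i : ℚ) / q) ^ 2 < ((p : ℚ) - 1) / 2) :
    ((twosComplementInv p
        (∑ i, (twosComplement p (u i) - twosComplement p (v i)) ^ 2) : ℚ)) / (q : ℚ) ^ 2
      = ∑ i, ((u i : ℚ) / q - (v i : ℚ) / q) ^ 2 := by
  have hq0 : (q : ℚ) ≠ 0 := by positivity
  set S : ℤ := ∑ i, (u i - v i) ^ 2 with hS
  have hS0 : 0 ≤ S := Finset.sum_nonneg fun i _ => sq_nonneg _
  -- the sum over quantized differences equals S / q^2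
  have hsum : ∑ i, ((u i : ℚ) / q - (v i : ℚ) / q) ^ 2 = (S : ℚ) / q ^ 2 := by
    rw [hS]
    push_cast
    rw [Finset.sum_div]
    exact Finset.sum_congr rfl fun i _ => by field_simp
  -- the ZMod sum is the cast of S
  have hzmod : (∑ i, (twosComplement p (u i) - twosComplement p (v i)) ^ 2)
      = ((S : ZMod p)) := by
    rw [hS]
    push_cast
    refine Finset.sum_congr rfl fun i _ => ?_
    rw [twosComplement_eq_cast, twosComplement_eq_cast]
  -- bound on S in ℚ
  have hSQ : (S : ℚ) < ((p : ℚ) - 1) / 2 := by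
    calc (S : ℚ) = (q : ℚ) ^ 2 * ((S : ℚ) / q ^ 2) := by field_simp
    _ < ((p : ℚ) - 1) / 2 := by rw [← hsum]; exact hbound
  have h2S : 2 * S < (p : ℤ) - 1 := by
    have : (2 * S : ℚ) < (p : ℚ) - 1 := by linarith
    exact_mod_cast this
  have hodd' : 2 ∣ (p : ℤ) - 1 := by
    obtain ⟨k, hk⟩ := hodd
    omega
  have hSlt : S < ((p : ℤ) - 1) / 2 := by omega
  have hp1 : 1 < p := hp.one_lt
  have hSp : S < (p : ℤ) := by omega
  -- compute val
  have hval : (((S : ZMod p)).val : ℤ) = S := by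
    haveI : NeZero p := ⟨by omega⟩
    rw [ZMod.val_intCast]
    exact Int.emod_eq_of_lt hS0 hSp
  have hinv : twosComplementInv p ((S : ZMod p)) = S := by
    unfold twosComplementInv
    rw [hval]
    simp [hSlt]
  rw [hzmod, hinv, hsum]
end
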